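/- arXiv:2008.10116 — 3 statements merged into one kernel-verified Lean document; each statement's English description precedes it below -/
import Mathlib

section
/- The octonionic norm is multiplicative: for all octonions x, y, we have ||x * y|| = ||x|| * ||y||. -/
/-- The seven base triples `(i,j,k)` with `ε_{ijk} = 1`. -/
def octTriples : List (Fin 8 × Fin 8 × Fin 8) :=
  [(1,2,3), (1,4,5), (1,7,6), (2,4,6), (2,5,7), (3,4,7), (3,6,5)]

/-- Even (cyclic) permutations of the base triples: `ε = 1`. -/
def octEven : List (Fin 8 × Fin 8 × Fin 8) :=
  octTriples.flatMap (fun t => [(t.1, t.2.1, t.2.2), (t.2.1, t.2.2, t.1), (t.2.2, t.1, t.2.1)])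

/-- Odd permutations of the base triples: `ε = -1`. -/
def octOdd : List (Fin 8 × Fin 8 × Fin 8) :=
  octTriples.flatMap (fun t => [(t.1, t.2.2, t.2.1), (t.2.2, t.2.1, t.1), (t.2.1, t.1, t.2.2)])

/-- The completely antisymmetric tensor `ε_{ijk}`. -/
def octEps (i j k : Fin 8) : ℝ :=
  if (i, j, k) ∈ octEven then 1 else if (i, j, k) ∈ octOdd then -1 else 0

/-- Structure constants: `e_i e_j = ∑ₖ (octStruct i j k) eₖ`, encoding
`e_0 e_j = e_j`, `e_i e_0 = e_i`, and `e_i e_j = -δ_{ij} e_0 + ε_{ijk} e_k` for `i, j ≥ 1`. -/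
def octStruct (i j k : Fin 8) : ℝ :=
  if i = 0 then (if j = k then 1 else 0)
  else if j = 0 then (if i = k then 1 else 0)
  else if k = 0 then (if i = j then -1 else 0)
  else octEps i j k

/-- An octonion, as its coordinates in the basis `e_0, …, e_7`. -/
def Octonion : Type := Fin 8 → ℝ

/-- Octonion multiplication. -/
def omul (x y : Octonion) : Octonion :=
  fun k => ∑ i : Fin 8, ∑ j : Fin 8, x i * y j * octStruct i j k

/-- The multiplicative identity `e_0`. -/
def oone : Octonion := fun k => if k = 0 then 1 else 0

/-- The zero octonion. -/
def ozero : Octonion := fun _ => 0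

/-- Octonionic conjugation `x̄ = x₀e₀ - ∑_{i≥1} xᵢeᵢ`. -/
def oconj (x : Octonion) : Octonion := fun k => if k = 0 then x 0 else -x k

/-- The squared octonionic norm `‖x‖² = ∑ xᵢ²`. -/
def onormSq (x : Octonion) : ℝ := ∑ i : Fin 8, (x i) ^ 2

/-- The octonionic norm. -/
noncomputable def onorm (x : Octonion) : ℝ := Real.sqrt (onormSq x)

/-- The real part `Re(x) = x₀`. -/
def ore (x : Octonion) : ℝ := x 0

/-- The imaginary part `Im(x) = x - Re(x) e₀`. -/
def oim (x : Octonion) : Octonion := fun k => if k = 0 then 0 else x k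

lemma omul_0 (x y : Octonion) : omul x y 0 = x 0 * y 0 - x 1 * y 1 - x 2 * y 2 - x 3 * y 3 - x 4 * y 4 - x 5 * y 5 - x 6 * y 6 - x 7 * y 7 := by
  simp only [omul, Fin.sum_univ_eight]
  simp (config := { decide := true }) [octStruct, octEps]
  ring

lemma omul_1 (x y : Octonion) : omul x y 1 = x 0 * y 1 + x 1 * y 0 + x 2 * y 3 - x 3 * y 2 + x 4 * y 5 - x 5 * y 4 - x 6 * y 7 + x 7 * y 6 := by
  simp only [omul, Fin.sum_univ_eight]
  simp (config := { decide := true }) [octStruct, octEps]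
  ring

lemma omul_2 (x y : Octonion) : omul x y 2 = x 0 * y 2 - x 1 * y 3 + x 2 * y 0 + x 3 * y 1 + x 4 * y 6 + x 5 * y 7 - x 6 * y 4 - x 7 * y 5 := by
  simp only [omul, Fin.sum_univ_eight]
  simp (config := { decide := true }) [octStruct, octEps]
  ring

lemma omul_3 (x y : Octonion) : omul x y 3 = x 0 * y 3 + x 1 * y 2 - x 2 * y 1 + x 3 * y 0 + x 4 * y 7 - x 5 * y 6 + x 6 * y 5 - x 7 * y 4 := by
  simp only [omul, Fin.sum_univ_eight]
  simp (config := { decide := true }) [octStruct, octEps]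
  ring

lemma omul_4 (x y : Octonion) : omul x y 4 = x 0 * y 4 - x 1 * y 5 - x 2 * y 6 - x 3 * y 7 + x 4 * y 0 + x 5 * y 1 + x 6 * y 2 + x 7 * y 3 := by
  simp only [omul, Fin.sum_univ_eight]
  simp (config := { decide := true }) [octStruct, octEps]
  ring

lemma omul_5 (x y : Octonion) : omul x y 5 = x 0 * y 5 + x 1 * y 4 - x 2 * y 7 + x 3 * y 6 - x 4 * y 1 + x 5 * y 0 - x 6 * y 3 + x 7 * y 2 := by
  simp only [omul, Fin.sum_univ_eight]
  simp (config := { decide := true }) [octStruct, octEps]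
  ring

lemma omul_6 (x y : Octonion) : omul x y 6 = x 0 * y 6 + x 1 * y 7 + x 2 * y 4 - x 3 * y 5 - x 4 * y 2 + x 5 * y 3 + x 6 * y 0 - x 7 * y 1 := by
  simp only [omul, Fin.sum_univ_eight]
  simp (config := { decide := true }) [octStruct, octEps]
  ring

lemma omul_7 (x y : Octonion) : omul x y 7 = x 0 * y 7 - x 1 * y 6 + x 2 * y 5 + x 3 * y 4 - x 4 * y 3 - x 5 * y 2 + x 6 * y 1 + x 7 * y 0 := by
  simp only [omul, Fin.sum_univ_eight]
  simp (config := { decide := true }) [octStruct, octEps]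
  ring

lemma onormSq_mul (x y : Octonion) : onormSq (omul x y) = onormSq x * onormSq y := by
  simp only [onormSq, Fin.sum_univ_eight, omul_0, omul_1, omul_2, omul_3, omul_4, omul_5, omul_6, omul_7]
  ring

/-- The octonionic norm is multiplicative: `‖x * y‖ = ‖x‖ * ‖y‖`. -/
theorem octonion_norm_mul (x y : Octonion) :
    onorm (omul x y) = onorm x * onorm y := by
  have hx : 0 ≤ onormSq x := Finset.sum_nonneg fun i _ => sq_nonneg _
  simp only [onorm, onormSq_mul]
  rw [Real.sqrt_mul hx]
end

section
/- For any \lambda \in R^7 and \rho > 0, the limit as t \to \infty of (1/48) \int_0^\infty (\rho r / \sqrt{t})^{\sqrt{9 + 6|\lambda|^2/\log t} - 3} e^{-r^2/2} r^7 dr equals e^{-|\lambda|^2/2}. -/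
open MeasureTheory Filter Real Set Topology

/-! Writing `α t = √(9 + 6|λ|²/log t) - 3`, the power `(ρ r / √t) ^ α t` factors as the
prefactor `(ρ / √t) ^ α t` times `r ^ α t`. Since `α t → 0`, dominated convergence (with
dominating function `(r⁶ + r⁸) e^{-r²/2}`) sends the remaining integral to the Gaussian moment
`∫₀^∞ r⁷ e^{-r²/2} dr = 48`. The prefactor is `exp (α t log ρ - α t log t / 2)`, and
`α t log t → |λ|²` because `α t log t` is the difference quotient of `x ↦ √(9 + 6|λ|² x)` at `0`
with step `x = 1 / log t`, whose derivative there is `6|λ|² / (2 · 3) = |λ|²`. -/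

lemma tendsto_sqrt_nine_add_div_log_sub_three_mul_log (c : ℝ) :
    Tendsto (fun t => (√(9 + 6 * c / log t) - 3) * log t) atTop (𝓝 c) := by
  have hsqrt_nine : √9 = 3 := by
    rw [show (9 : ℝ) = 3 ^ 2 by norm_num, sqrt_sq three_pos.le]
  have hderiv : HasDerivAt (fun x => √(9 + 6 * c * x)) c 0 := by
    convert (((hasDerivAt_id' (0 : ℝ)).const_mul (6 * c)).const_add 9).sqrt (by norm_num) using 1
    rw [mul_zero, add_zero, hsqrt_nine]
    ring
  have hstep : Tendsto (fun t => (log t)⁻¹) atTop (𝓝[≠] 0) :=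
    tendsto_nhdsWithin_iff.2 ⟨tendsto_inv_atTop_zero.comp tendsto_log_atTop,
      (tendsto_log_atTop.eventually_gt_atTop 0).mono fun t ht => inv_ne_zero ht.ne'⟩
  refine ((hasDerivAt_iff_tendsto_slope_zero.1 hderiv).comp hstep).congr fun t => ?_
  simp [div_eq_mul_inv, mul_comm, hsqrt_nine]

lemma rpow_add_le_rpow_sub_one_add_rpow_add_one {r a : ℝ} (s : ℝ) (hr : 0 < r) (ha : |a| ≤ 1) :
    r ^ (s + a) ≤ r ^ (s - 1) + r ^ (s + 1) := by
  obtain ⟨ha₁, ha₂⟩ := abs_le.1 ha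
  rcases le_total r 1 with h | h
  · exact (rpow_le_rpow_of_exponent_ge hr h (by linarith)).trans
      (le_add_of_nonneg_right (by positivity))
  · exact (rpow_le_rpow_of_exponent_le h (by linarith)).trans
      (le_add_of_nonneg_left (by positivity))

lemma tendsto_integral_rpow_mul_rpow_mul_exp_neg_mul_sq {ι : Type*} {l : Filter ι}
    [l.IsCountablyGenerated] {α : ι → ℝ} (hα : Tendsto α l (𝓝 0)) {b s : ℝ} (hb : 0 < b)
    (hs : 0 < s) :
    Tendsto (fun i => ∫ r in Ioi 0, r ^ α i * (r ^ s * exp (-b * r ^ 2))) l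
      (𝓝 (∫ r in Ioi 0, r ^ s * exp (-b * r ^ 2))) := by
  refine tendsto_integral_filter_of_dominated_convergence
    (fun r => (r ^ (s - 1) + r ^ (s + 1)) * exp (-b * r ^ 2)) ?_ ?_ ?_ ?_
  · exact .of_forall fun i => (by fun_prop : Measurable _).aestronglyMeasurable
  · filter_upwards [hα.eventually (eventually_abs_sub_lt 0 one_pos)] with i hi
    rw [sub_zero] at hi
    rw [ae_restrict_iff' measurableSet_Ioi]
    refine .of_forall fun r (hr : 0 < r) => ?_
    rw [norm_of_nonneg (by positivity), ← mul_assoc, ← rpow_add hr, add_comm]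
    exact mul_le_mul_of_nonneg_right (rpow_add_le_rpow_sub_one_add_rpow_add_one s hr hi.le)
      (exp_nonneg _)
  · simp_rw [add_mul]
    exact (integrableOn_rpow_mul_exp_neg_mul_sq hb (by linarith)).add
      (integrableOn_rpow_mul_exp_neg_mul_sq hb (by linarith))
  · rw [ae_restrict_iff' measurableSet_Ioi]
    refine .of_forall fun r (hr : 0 < r) => ?_
    simpa only [rpow_zero, one_mul] using
      (tendsto_const_nhds.rpow hα (Or.inl hr.ne')).mul_const (r ^ s * exp (-b * r ^ 2))

lemma integral_rpow_seven_mul_exp_neg_half_mul_sq :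
    ∫ r in Ioi (0 : ℝ), r ^ (7 : ℝ) * exp (-(1 / 2) * r ^ 2) = 48 := by
  have h := integral_rpow_mul_exp_neg_mul_rpow (p := 2) (q := 7) (b := 1 / 2) two_pos
    (by norm_num) (by norm_num)
  simp_rw [rpow_two] at h
  rw [h, show ((7 : ℝ) + 1) / 2 = (3 : ℕ) + 1 by norm_num, Gamma_nat_eq_factorial,
    show (-((7 : ℝ) + 1) / 2) = (-4 : ℤ) by norm_num, rpow_intCast]
  norm_num [Nat.factorial]

lemma tendsto_div_sqrt_rpow {α : ℝ → ℝ} {ρ c : ℝ} (hρ : 0 < ρ) (hα : Tendsto α atTop (𝓝 0))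
    (hαlog : Tendsto (fun t => α t * log t) atTop (𝓝 c)) :
    Tendsto (fun t => (ρ / √t) ^ α t) atTop (𝓝 (exp (-c / 2))) := by
  have hexponent : Tendsto (fun t => log ρ * α t - α t * log t / 2) atTop (𝓝 (-c / 2)) := by
    simpa [neg_div] using (hα.const_mul (log ρ)).sub (hαlog.div_const 2)
  refine ((continuous_exp.tendsto _).comp hexponent).congr' ?_
  filter_upwards [eventually_gt_atTop 0] with t ht
  have hsqrt : 0 < √t := sqrt_pos.2 ht
  rw [Function.comp_apply, rpow_def_of_pos (div_pos hρ hsqrt), log_div hρ.ne' hsqrt.ne',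
    log_sqrt ht.le]
  congr 1
  ring

/-- The limit computation in the asymptotic winding on `𝕆¹`:
`lim_{t→∞} (1/48) ∫₀^∞ (ρ r/√t)^{√(9 + 6|λ|²/log t) - 3} e^{-r²/2} r⁷ dr = e^{-|λ|²/2}`. -/
theorem octonion_flat_winding_limit (lam : EuclideanSpace ℝ (Fin 7)) (ρ : ℝ) (hρ : 0 < ρ) :
    Tendsto
      (fun t : ℝ => (1 / 48) *
        ∫ r in Set.Ioi (0:ℝ),
          (ρ * r / Real.sqrt t) ^ (Real.sqrt (9 + 6 * ‖lam‖ ^ 2 / Real.log t) - 3) *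
            Real.exp (-r ^ 2 / 2) * r ^ 7)
      atTop (nhds (Real.exp (-‖lam‖ ^ 2 / 2))) := by
  set c := ‖lam‖ ^ 2
  set α : ℝ → ℝ := fun t => √(9 + 6 * c / log t) - 3
  have hαlog : Tendsto (fun t => α t * log t) atTop (𝓝 c) :=
    tendsto_sqrt_nine_add_div_log_sub_three_mul_log c
  have hα : Tendsto α atTop (𝓝 0) := by
    refine (hαlog.div_atTop tendsto_log_atTop).congr' ?_
    filter_upwards [tendsto_log_atTop.eventually_gt_atTop 0] with t ht
    exact mul_div_cancel_right₀ _ ht.ne'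
  have hintegral := tendsto_integral_rpow_mul_rpow_mul_exp_neg_mul_sq hα (b := 1 / 2) (s := 7)
    (by norm_num) (by norm_num)
  rw [integral_rpow_seven_mul_exp_neg_half_mul_sq] at hintegral
  have hlim := ((tendsto_div_sqrt_rpow hρ hα hαlog).mul hintegral).const_mul (1 / 48)
  rw [show 1 / 48 * (exp (-c / 2) * 48) = exp (-c / 2) by ring] at hlim
  refine hlim.congr' ?_
  filter_upwards [eventually_gt_atTop 0] with t ht
  rw [← integral_const_mul]
  congr 1
  refine setIntegral_congr_fun measurableSet_Ioi fun r (hr : 0 < r) => ?_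
  rw [mul_div_right_comm, mul_rpow (div_pos hρ (sqrt_pos.2 ht)).le hr.le, ← rpow_natCast r 7,
    Nat.cast_ofNat, show -r ^ 2 / 2 = -(1 / 2) * r ^ 2 by ring]
  ring
end

section
/- Suppose m(t) = e^{4t}(C - \kappa) + \kappa, where C = \cosh^2(r_0) and \kappa = (2\hat{b}+8)/4, and define n(t) = e^{12t}(\cosh^4(r_0) - (4\hat{b}+20)\int_0^t e^{-12s} m(s) ds) and p(t) = e^{24t}(\cosh^6(r_0) - (6\hat{b}+36)\int_0^t e^{-24s} n(s) ds). Then \lim_{t\to\infty} e^{-24t} p(t) = \cosh^6(r_0) + (6\sqrt{9+|\lambda|^2} - 18)\big[\cosh^4(r_0)/12 + (\sqrt{9+|\lambda|^2}-2)\cosh^2(r_0)/60 + (|\lambda|^2 - 3\sqrt{9+|\lambda|^2} + 11)/720\big]. -/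
open Filter intervalIntegral

lemma hwml_integral_exp_mul (c : ℝ) (hc : c ≠ 0) (t : ℝ) :
    ∫ x in (0:ℝ)..t, Real.exp (c * x) = (Real.exp (c * t) - 1) / c := by
  rw [integral_comp_mul_left (fun y => Real.exp y) hc]
  simp [integral_exp, smul_eq_mul]
  ring

lemma hwml_exp_tendsto (c : ℝ) (hc : 0 < c) :
    Tendsto (fun t : ℝ => Real.exp (-c * t)) atTop (nhds 0) := by
  have h : Tendsto (fun t : ℝ => c * t) atTop atTop :=
    Tendsto.const_mul_atTop hc tendsto_id
  have := Real.tendsto_exp_neg_atTop_nhds_zero.comp h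
  simpa [Function.comp_def, neg_mul] using this

/-- The iterated-integral limit in the hyperbolic winding asymptotics on `𝕆H¹`. -/
theorem hyperbolic_winding_moment_limit (lam : EuclideanSpace ℝ (Fin 7)) (r₀ : ℝ) (hr₀ : 0 < r₀)
    (m n p : ℝ → ℝ)
    (hm : ∀ t, m t = Real.exp (4 * t) * (Real.cosh r₀ ^ 2 - (2 * (-3 - Real.sqrt (9 + ‖lam‖ ^ 2)) + 8) / 4)
        + (2 * (-3 - Real.sqrt (9 + ‖lam‖ ^ 2)) + 8) / 4)
    (hn : ∀ t, n t = Real.exp (12 * t) * (Real.cosh r₀ ^ 4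
        - (4 * (-3 - Real.sqrt (9 + ‖lam‖ ^ 2)) + 20) * ∫ s in (0:ℝ)..t, Real.exp (-12 * s) * m s))
    (hp : ∀ t, p t = Real.exp (24 * t) * (Real.cosh r₀ ^ 6
        - (6 * (-3 - Real.sqrt (9 + ‖lam‖ ^ 2)) + 36) * ∫ s in (0:ℝ)..t, Real.exp (-24 * s) * n s)) :
    Tendsto (fun t => Real.exp (-24 * t) * p t) atTop
      (nhds (Real.cosh r₀ ^ 6 + (6 * Real.sqrt (9 + ‖lam‖ ^ 2) - 18) *
        (Real.cosh r₀ ^ 4 / 12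
          + (Real.sqrt (9 + ‖lam‖ ^ 2) - 2) * Real.cosh r₀ ^ 2 / 60
          + (‖lam‖ ^ 2 - 3 * Real.sqrt (9 + ‖lam‖ ^ 2) + 11) / 720))) := by
  set s := Real.sqrt (9 + ‖lam‖ ^ 2) with hs
  have hs2 : s ^ 2 = 9 + ‖lam‖ ^ 2 := Real.sq_sqrt (by positivity)
  set C : ℝ := Real.cosh r₀ ^ 2 with hC
  set κ : ℝ := (2 * (-3 - s) + 8) / 4 with hκ
  set D : ℝ := C - κ with hD
  set A : ℝ := 4 * (-3 - s) + 20 with hA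
  set B : ℝ := 6 * (-3 - s) + 36 with hB
  -- Step 1: the inner integral
  have hI1 : ∀ t : ℝ, (∫ x in (0:ℝ)..t, Real.exp (-12 * x) * m x)
      = D * ((Real.exp (-8 * t) - 1) / (-8)) + κ * ((Real.exp (-12 * t) - 1) / (-12)) := by
    intro t
    have hcong : ∀ x ∈ Set.uIcc (0:ℝ) t, Real.exp (-12 * x) * m x
        = D * Real.exp (-8 * x) + κ * Real.exp (-12 * x) := by
      intro x _
      rw [hm x]
      have e1 : Real.exp (-12 * x) * Real.exp (4 * x) = Real.exp (-8 * x) := by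
        rw [← Real.exp_add]; ring_nf
      linear_combination D * e1
    rw [intervalIntegral.integral_congr hcong, intervalIntegral.integral_add
        ((by fun_prop : Continuous _).intervalIntegrable 0 t)
        ((by fun_prop : Continuous _).intervalIntegrable 0 t),
      intervalIntegral.integral_const_mul, intervalIntegral.integral_const_mul,
      hwml_integral_exp_mul (-8) (by norm_num) t, hwml_integral_exp_mul (-12) (by norm_num) t]
  -- Step 2: the outer integral
  have hI2 : ∀ t : ℝ, (∫ x in (0:ℝ)..t, Real.exp (-24 * x) * n x)
      = (C ^ 2 - A * D / 8 - A * κ / 12) * ((Real.exp (-12 * t) - 1) / (-12))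
        + (A * D / 8) * ((Real.exp (-20 * t) - 1) / (-20))
        + (A * κ / 12) * ((Real.exp (-24 * t) - 1) / (-24)) := by
    intro t
    have hcong : ∀ x ∈ Set.uIcc (0:ℝ) t, Real.exp (-24 * x) * n x
        = (C ^ 2 - A * D / 8 - A * κ / 12) * Real.exp (-12 * x)
          + (A * D / 8) * Real.exp (-20 * x) + (A * κ / 12) * Real.exp (-24 * x) := by
      intro x _
      rw [hn x, hI1 x]
      have e1 : Real.exp (-24 * x) * Real.exp (12 * x) = Real.exp (-12 * x) := by
        rw [← Real.exp_add]; ring_nf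
      have e2 : Real.exp (-12 * x) * Real.exp (-8 * x) = Real.exp (-20 * x) := by
        rw [← Real.exp_add]; ring_nf
      have e3 : Real.exp (-12 * x) * Real.exp (-12 * x) = Real.exp (-24 * x) := by
        rw [← Real.exp_add]; ring_nf
      have hC4 : Real.cosh r₀ ^ 4 = C ^ 2 := by rw [hC]; ring
      rw [hC4]
      linear_combination (C ^ 2 - A * (D * ((Real.exp (-8 * x) - 1) / (-8))
          + κ * ((Real.exp (-12 * x) - 1) / (-12)))) * e1
        + (A * D / 8) * e2 + (A * κ / 12) * e3
    rw [intervalIntegral.integral_congr hcong]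
    rw [intervalIntegral.integral_add
        ((by fun_prop : Continuous _).intervalIntegrable 0 t)
        ((by fun_prop : Continuous _).intervalIntegrable 0 t),
      intervalIntegral.integral_add
        ((by fun_prop : Continuous _).intervalIntegrable 0 t)
        ((by fun_prop : Continuous _).intervalIntegrable 0 t),
      intervalIntegral.integral_const_mul, intervalIntegral.integral_const_mul,
      intervalIntegral.integral_const_mul,
      hwml_integral_exp_mul (-12) (by norm_num) t, hwml_integral_exp_mul (-20) (by norm_num) t,
      hwml_integral_exp_mul (-24) (by norm_num) t]
  -- Step 3: explicit formula for e^{-24t} p t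
  set L : ℝ := C ^ 3 + (6 * s - 18) *
      (C ^ 2 / 12 + (s - 2) * C / 60 + (‖lam‖ ^ 2 - 3 * s + 11) / 720) with hL
  set c₁ : ℝ := B * ((C ^ 2 - A * D / 8 - A * κ / 12) / 12) with hc₁
  set c₂ : ℝ := B * (A * D / 8 / 20) with hc₂
  set c₃ : ℝ := B * (A * κ / 12 / 24) with hc₃
  have hpt : ∀ t : ℝ, Real.exp (-24 * t) * p t
      = L + (c₁ * Real.exp (-12 * t) + c₂ * Real.exp (-20 * t) + c₃ * Real.exp (-24 * t)) := by
    intro t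
    rw [hp t, hI2 t]
    have e0 : Real.exp (-24 * t) * Real.exp (24 * t) = 1 := by
      rw [← Real.exp_add]; ring_nf; exact Real.exp_zero
    have hC6 : Real.cosh r₀ ^ 6 = C ^ 3 := by rw [hC]; ring
    rw [hC6]
    rw [hL, hc₁, hc₂, hc₃, hB, hA, hD, hκ]
    linear_combination (C ^ 3 - (6 * (-3 - s) + 36) *
        ((C ^ 2 - (4 * (-3 - s) + 20) * (C - (2 * (-3 - s) + 8) / 4) / 8
            - (4 * (-3 - s) + 20) * ((2 * (-3 - s) + 8) / 4) / 12) * ((Real.exp (-12 * t) - 1) / (-12))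
          + ((4 * (-3 - s) + 20) * (C - (2 * (-3 - s) + 8) / 4) / 8) * ((Real.exp (-20 * t) - 1) / (-20))
          + ((4 * (-3 - s) + 20) * ((2 * (-3 - s) + 8) / 4) / 12) * ((Real.exp (-24 * t) - 1) / (-24)))) * e0
      + ((6 * s - 18) / 720) * hs2
  -- Step 4: take the limit
  have H : Tendsto (fun t : ℝ => L + (c₁ * Real.exp (-12 * t) + c₂ * Real.exp (-20 * t)
      + c₃ * Real.exp (-24 * t))) atTop (nhds (L + (c₁ * 0 + c₂ * 0 + c₃ * 0))) :=
    tendsto_const_nhds.add ((((hwml_exp_tendsto 12 (by norm_num)).const_mul c₁).add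
      ((hwml_exp_tendsto 20 (by norm_num)).const_mul c₂)).add
      ((hwml_exp_tendsto 24 (by norm_num)).const_mul c₃))
  have H2 := H.congr (fun t => (hpt t).symm)
  have hval : Real.cosh r₀ ^ 6 + (6 * s - 18) * (Real.cosh r₀ ^ 4 / 12 + (s - 2) * C / 60
      + (‖lam‖ ^ 2 - 3 * s + 11) / 720) = L + (c₁ * 0 + c₂ * 0 + c₃ * 0) := by
    rw [hL, hC]; ring
  rw [hval]
  exact H2
end
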